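/- For the iteration z^i = z^{i-1} + w^i with w^0 = 0 and w^i = ((2i-3)/(2i+1)) w^{i-1} + ((8i-4)/(2i+1)) ω D^{-1}(f - A z^{i-1}), where A z = f, the error satisfies z^m - z = P_m(ω D^{-1} A)(z^0 - z), where P_m is given by the recursion P_0(x)=1, P_1(x)=1-(4/3)x, P_i(x) = ((4i-2)/(2i+1))(1-2x)P_{i-1}(x) - ((2i-3)/(2i+1))P_{i-2}(x). -/
import Mathlib


open Polynomial Matrix

/-- The scaled fourth-kind Chebyshev polynomials as polynomials over `ℝ`:
`P_0 = 1`, `P_1 = 1-(4/3)X`,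
`P_i = ((4i-2)/(2i+1))(1-2X)P_{i-1} - ((2i-3)/(2i+1))P_{i-2}`. -/
noncomputable def chebPpoly : ℕ → Polynomial ℝ
  | 0 => 1
  | 1 => 1 - C (4/3 : ℝ) * X
  | (i+2) =>
      C ((4*(i+2 : ℝ)-2)/(2*(i+2 : ℝ)+1)) * (1 - 2*X) * chebPpoly (i+1)
        - C ((2*(i+2 : ℝ)-3)/(2*(i+2 : ℝ)+1)) * chebPpoly i

/-- The fourth-kind Chebyshev smoothing iteration: returns the pair `(z^i, w^i)` with
`z^0 = z0`, `w^0 = 0`, and for `i ≥ 1`,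
`w^i = ((2i-3)/(2i+1)) w^{i-1} + ((8i-4)/(2i+1)) ω D⁻¹ (f - A z^{i-1})`,
`z^i = z^{i-1} + w^i`. -/
noncomputable def cheb4Iter {n : ℕ} (A D : Matrix (Fin n) (Fin n) ℝ) (ω : ℝ)
    (f z0 : Fin n → ℝ) : ℕ → (Fin n → ℝ) × (Fin n → ℝ)
  | 0 => (z0, 0)
  | (i+1) =>
      let p := cheb4Iter A D ω f z0 i
      let w := ((2*(i+1 : ℝ)-3)/(2*(i+1 : ℝ)+1)) • p.2
        + ((8*(i+1 : ℝ)-4)/(2*(i+1 : ℝ)+1)) • (ω • (D⁻¹ *ᵥ (f - A *ᵥ p.1)))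
      (p.1 + w, w)


lemma chebP_rec (i : ℕ) :
    chebPpoly (i+1) - chebPpoly i
      = C ((2*(i+1 : ℝ)-3)/(2*(i+1 : ℝ)+1)) * (chebPpoly i - chebPpoly (i-1))
        - C ((8*(i+1 : ℝ)-4)/(2*(i+1 : ℝ)+1)) * (X * chebPpoly i) := by
  match i with
  | 0 =>
    norm_num [chebPpoly]
  | (j+1) =>
    have hne : (2*((j:ℝ)+2)+1) ≠ 0 := by positivity
    have e1 : C ((4*((j:ℝ)+2)-2)/(2*((j:ℝ)+2)+1))
        = C ((2*((j:ℝ)+2)-3)/(2*((j:ℝ)+2)+1)) + 1 := by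
      rw [← C_1, ← C_add]
      congr 1
      field_simp
      ring
    have e2 : C ((8*((j:ℝ)+2)-4)/(2*((j:ℝ)+2)+1))
        = 2 * C ((2*((j:ℝ)+2)-3)/(2*((j:ℝ)+2)+1)) + 2 := by
      rw [(map_ofNat C 2).symm, ← C_mul, ← C_add]
      congr 1
      field_simp
      ring
    show chebPpoly (j+2) - chebPpoly (j+1) = _
    simp only [chebPpoly]
    try simp only [Nat.add_sub_cancel]
    push_cast
    rw [show ((j:ℝ)+1+1) = (j:ℝ)+2 from by ring, e1, e2]
    ring

theorem cheb4Iter_error {n : ℕ} (A D : Matrix (Fin n) (Fin n) ℝ)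
    (hA : IsUnit A.det) (hD : IsUnit D.det) (ω : ℝ) (f z z0 : Fin n → ℝ)
    (hz : A *ᵥ z = f) (m : ℕ) :
    (cheb4Iter A D ω f z0 m).1 - z
      = (Polynomial.aeval (ω • (D⁻¹ * A)) (chebPpoly m)) *ᵥ (z0 - z) := by
  set M := ω • (D⁻¹ * A) with hM
  suffices h : ∀ k, (cheb4Iter A D ω f z0 k).1 - z
      = (aeval M (chebPpoly k)) *ᵥ (z0 - z) ∧
      (cheb4Iter A D ω f z0 k).2
      = (aeval M (chebPpoly k - chebPpoly (k-1))) *ᵥ (z0 - z) by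
    exact (h m).1
  intro k
  induction k with
  | zero => simp [cheb4Iter, chebPpoly]
  | succ i ih =>
    obtain ⟨h1, h2⟩ := ih
    set p := cheb4Iter A D ω f z0 i with hp
    -- residual computation
    have hres : ω • (D⁻¹ *ᵥ (f - A *ᵥ p.1))
        = -(M *ᵥ ((aeval M (chebPpoly i)) *ᵥ (z0 - z))) := by
      have : f - A *ᵥ p.1 = -(A *ᵥ (p.1 - z)) := by
        rw [← hz, ← Matrix.mulVec_sub, show z - p.1 = -(p.1 - z) from (neg_sub _ _).symm,
          Matrix.mulVec_neg]
      rw [this, h1, Matrix.mulVec_neg, smul_neg, Matrix.mulVec_mulVec, hM,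
        Matrix.smul_mulVec, Matrix.mulVec_mulVec]
    have hw : (cheb4Iter A D ω f z0 (i+1)).2
        = (aeval M (chebPpoly (i+1) - chebPpoly i)) *ᵥ (z0 - z) := by
      show ((2*(i+1 : ℝ)-3)/(2*(i+1 : ℝ)+1)) • p.2
        + ((8*(i+1 : ℝ)-4)/(2*(i+1 : ℝ)+1)) • (ω • (D⁻¹ *ᵥ (f - A *ᵥ p.1))) = _
      rw [hres, h2, chebP_rec]
      simp only [map_sub, _root_.map_mul, aeval_C, aeval_X,
        Algebra.algebraMap_eq_smul_one, smul_mul_assoc, one_mul,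
        Matrix.sub_mulVec, Matrix.smul_mulVec, ← Matrix.mulVec_mulVec,
        smul_neg]
      abel
    refine ⟨?_, by simpa using hw⟩
    show p.1 + (cheb4Iter A D ω f z0 (i+1)).2 - z = _
    rw [hw, add_sub_right_comm, h1, ← Matrix.add_mulVec, ← map_add,
      add_sub_cancel]
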